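/- Let H be a complex Hilbert space of dimension ≥ 2 and S the swap operator on H⊗H. Define Ψ(X) = λ1(I⊗X) + λ2(X⊗I) + λ3 S(I⊗X) + λ4 S(X⊗I). If Ψ is a positive map (Ψ(X) ≥ 0 whenever X ≥ 0), then λ1 ≥ 0, λ2 ≥ 0, λ4 = conj(λ3), and λ1·λ2 ≥ |λ3|². -/

import Mathlib

open Matrix Kronecker ComplexOrder

/-- The swap operator on `H ⊗ H`, as a matrix: `S (x ⊗ y) = y ⊗ x`. -/
def swap (n : Type*) [DecidableEq n] : Matrix (n × n) (n × n) ℂ :=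
  Matrix.of fun p q => if p.1 = q.2 ∧ p.2 = q.1 then (1 : ℂ) else 0

lemma swap_mul_apply {n : Type*} [DecidableEq n] [Fintype n]
    (A : Matrix (n × n) (n × n) ℂ) (p q : n × n) :
    (swap n * A) p q = A (p.2, p.1) q := by
  rw [Matrix.mul_apply]
  have h : ∀ r : n × n, swap n p r * A r q
      = if r = (p.2, p.1) then A (p.2, p.1) q else 0 := by
    intro r
    simp only [_root_.swap, Matrix.of_apply]
    by_cases h : r = (p.2, p.1)
    · subst h; simp
    · have hne : ¬(p.1 = r.2 ∧ p.2 = r.1) := by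
        rintro ⟨h1, h2⟩; exact h (Prod.ext h2.symm h1.symm)
      simp [hne, h]
  simp only [h]
  simp

lemma stdBasis_posSemidef {d : ℕ} (i : Fin d) :
    (Matrix.single i i (1 : ℂ)).PosSemidef := by
  rw [Matrix.posSemidef_iff_dotProduct_mulVec]
  constructor
  · ext p q
    simp [Matrix.conjTranspose_apply, Matrix.single, and_comm]
  · intro x
    have h : Matrix.single i i (1 : ℂ) *ᵥ x = Pi.single i (x i) := by
      ext j
      simp [Matrix.mulVec, dotProduct, Matrix.single, Pi.single_apply,
        Finset.sum_ite_eq, ite_and]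
      by_cases hj : j = i
      · simp [hj]
      · simp [hj, Ne.symm hj]
    rw [h, dotProduct_single, Pi.star_apply]
    rw [Complex.nonneg_iff]
    constructor
    · simp [Complex.mul_re, Complex.star_def]; nlinarith [Complex.normSq_nonneg (x i)]
    · simp [Complex.mul_im, Complex.star_def]; ring


/-- If `Ψ(X) = λ₁ I⊗X + λ₂ X⊗I + λ₃ S(I⊗X) + λ₄ S(X⊗I)` is a positive map, then
`λ₁ ≥ 0`, `λ₂ ≥ 0`, `λ₄ = conj λ₃` and `λ₁λ₂ ≥ |λ₃|²`. -/
theorem positive_implies_coefficient_conditions {d : ℕ} (hd : 2 ≤ d)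
    (l1 l2 l3 l4 : ℂ)
    (hpos : ∀ X : Matrix (Fin d) (Fin d) ℂ, X.PosSemidef →
      (l1 • ((1 : Matrix (Fin d) (Fin d) ℂ) ⊗ₖ X) + l2 • (X ⊗ₖ (1 : Matrix (Fin d) (Fin d) ℂ))
        + l3 • (swap (Fin d) * ((1 : Matrix (Fin d) (Fin d) ℂ) ⊗ₖ X))
        + l4 • (swap (Fin d) * (X ⊗ₖ (1 : Matrix (Fin d) (Fin d) ℂ)))).PosSemidef) :
    0 ≤ l1 ∧ 0 ≤ l2 ∧ l4 = star l3 ∧ ((‖l3‖ ^ 2 : ℝ) : ℂ) ≤ l1 * l2 := by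
  set i0 : Fin d := ⟨0, by omega⟩ with hi0
  set i1 : Fin d := ⟨1, by omega⟩ with hi1
  have h01 : i0 ≠ i1 := by simp [hi0, hi1, Fin.ext_iff]
  set X := Matrix.single i0 i0 (1:ℂ) with hX
  set M := l1 • ((1 : Matrix (Fin d) (Fin d) ℂ) ⊗ₖ X) + l2 • (X ⊗ₖ (1 : Matrix (Fin d) (Fin d) ℂ))
        + l3 • (swap (Fin d) * ((1 : Matrix (Fin d) (Fin d) ℂ) ⊗ₖ X))
        + l4 • (swap (Fin d) * (X ⊗ₖ (1 : Matrix (Fin d) (Fin d) ℂ))) with hMdef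
  have e11 : M (i1,i0) (i1,i0) = l1 := by
    simp [hMdef, Matrix.add_apply, Matrix.smul_apply, swap_mul_apply,
      Matrix.kroneckerMap_apply, Matrix.one_apply, hX, Matrix.single,
      h01, h01.symm]
  have e12 : M (i1,i0) (i0,i1) = l4 := by
    simp [hMdef, Matrix.add_apply, Matrix.smul_apply, swap_mul_apply,
      Matrix.kroneckerMap_apply, Matrix.one_apply, hX, Matrix.single,
      h01, h01.symm]
  have e21 : M (i0,i1) (i1,i0) = l3 := by
    simp [hMdef, Matrix.add_apply, Matrix.smul_apply, swap_mul_apply,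
      Matrix.kroneckerMap_apply, Matrix.one_apply, hX, Matrix.single,
      h01, h01.symm]
  have e22 : M (i0,i1) (i0,i1) = l2 := by
    simp [hMdef, Matrix.add_apply, Matrix.smul_apply, swap_mul_apply,
      Matrix.kroneckerMap_apply, Matrix.one_apply, hX, Matrix.single,
      h01, h01.symm]
  have hMpos : M.PosSemidef := hpos X (stdBasis_posSemidef i0)
  -- the key scalar inequality
  have hQ : ∀ a b : ℂ, 0 ≤ l1 * (star a * a) + l2 * (star b * b)
      + l3 * (star b * a) + l4 * (star a * b) := by
    intro a b
    have h := hMpos.dotProduct_mulVec_nonneg (Pi.single (i1,i0) a + Pi.single (i0,i1) b)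
    have key : star ((Pi.single (i1,i0) a + Pi.single (i0,i1) b : Fin d × Fin d → ℂ)) ⬝ᵥ
          (M *ᵥ ((Pi.single (i1,i0) a + Pi.single (i0,i1) b : Fin d × Fin d → ℂ)))
        = l1 * (star a * a) + l2 * (star b * b)
          + l3 * (star b * a) + l4 * (star a * b) := by
      simp only [star_add, star_smul, ← Pi.single_star, star_one,
        Matrix.mulVec_add, Matrix.mulVec_smul, Matrix.mulVec_single,
        add_dotProduct, smul_dotProduct, dotProduct_add,
        dotProduct_smul, single_dotProduct, smul_eq_mul,
        Pi.add_apply, Pi.smul_apply, Matrix.col_apply, op_smul_eq_mul]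
      rw [e11, e12, e21, e22]
      ring
    rwa [key] at h
  -- l1 ≥ 0
  have hl1 : 0 ≤ l1 := by simpa using hQ 1 0
  have hl2 : 0 ≤ l2 := by simpa using hQ 0 1
  have hl1' := Complex.nonneg_iff.mp hl1
  have hl2' := Complex.nonneg_iff.mp hl2
  -- l4 = conj l3
  have h11 := Complex.nonneg_iff.mp (hQ 1 1)
  have h1I := Complex.nonneg_iff.mp (hQ 1 Complex.I)
  have him1 : l3.im + l4.im = 0 := by
    have := h11.2
    simp [Complex.add_im, Complex.mul_im, Complex.star_def] at this
    linarith [hl1'.2, hl2'.2]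
  have hre1 : l3.re - l4.re = 0 := by
    have := h1I.2
    simp [Complex.add_im, Complex.mul_im, Complex.mul_re, Complex.star_def,
      Complex.conj_re, Complex.conj_im] at this
    linarith [hl1'.2, hl2'.2]
  have hl4 : l4 = star l3 := by
    apply Complex.ext
    · simp [Complex.star_def]; linarith [hre1]
    · simp [Complex.star_def]; linarith [him1]
  -- the determinant inequality
  have hquad : ∀ t : ℝ, 0 ≤ (l2.re * ‖l3‖^2) * (t * t) + (-(2 * ‖l3‖^2)) * t + l1.re := by
    intro t
    have h := Complex.nonneg_iff.mp (hQ 1 (-(t:ℂ) * l3))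
    have := h.1
    simp only [star_mul', star_neg, Complex.star_def, Complex.conj_ofReal] at this
    have hre : (l1 * ((starRingEnd ℂ) 1 * 1) + l2 * (-(t:ℂ) * (starRingEnd ℂ) l3 * (-(t:ℂ) * l3))
        + l3 * (-(t:ℂ) * (starRingEnd ℂ) l3 * 1) + l4 * ((starRingEnd ℂ) 1 * (-(t:ℂ) * l3))).re
        = (l2.re * ‖l3‖^2) * (t * t) + (-(2 * ‖l3‖^2)) * t + l1.re := by
      rw [hl4]
      simp [Complex.add_re, Complex.mul_re, Complex.mul_im, Complex.star_def,
        Complex.conj_re, Complex.conj_im, Complex.ofReal_re, Complex.ofReal_im]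
      simp only [Complex.sq_norm, Complex.normSq_apply]
      ring
    rw [hre] at this
    exact this
  have hdisc := discrim_le_zero hquad
  have hd2 : (‖l3‖:ℝ)^2 ≤ l1.re * l2.re := by
    rw [discrim] at hdisc
    have hm : (0:ℝ) ≤ ‖l3‖^2 := sq_nonneg _
    rcases eq_or_lt_of_le hm with hm0 | hm0
    · rw [← hm0]; exact mul_nonneg hl1'.1 hl2'.1
    · nlinarith [hdisc, hm0]
  refine ⟨hl1, hl2, hl4, ?_⟩
  have hl1r : l1 = (l1.re : ℂ) := by apply Complex.ext <;> simp [hl1'.2.symm]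
  have hl2r : l2 = (l2.re : ℂ) := by apply Complex.ext <;> simp [hl2'.2.symm]
  rw [hl1r, hl2r, ← Complex.ofReal_mul, Complex.real_le_real]
  exact hd2
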